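/- Let F be a field of characteristic zero, n ≥ 1, and let U_n be the operator on F[x_1,…,x_n] given by U_n f = (1/2)·Σ_{i=1}^n x_i²·∂²f/∂x_i². For every partition λ = (λ_1,…,λ_s) with positive parts, U_n p_λ = (1/2)·(Σ_{k=1}^s λ_k(λ_k−1))·p_λ + (1/2)·Σ_{(j,k): j≠k} λ_j·λ_k·p_{λ_j+λ_k}·∏_{m∉{j,k}} p_{λ_m}, where the second sum runs over ordered pairs (j,k) with 1 ≤ j,k ≤ s and j ≠ k. -/

import Mathlib

/-! Each `pderiv i` is a derivation, so the second-order Leibniz rule splits `∂ᵢ²(∏ₘ p_{λₘ})` into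
diagonal terms `∂ᵢ² p_{λⱼ} · ∏_{m ≠ j} p_{λₘ}` and cross terms
`∂ᵢ p_{λⱼ} · ∂ᵢ p_{λₖ} · ∏_{m ∉ {j, k}} p_{λₘ}` over ordered pairs `j ≠ k`. Since `xᵢ ∂ᵢ p_r = r xᵢ^r`,
after multiplying by `xᵢ²` and summing over `i` these become `r(r-1) p_r` and `a b p_{a+b}`. -/

open Finset MvPolynomial

variable {F : Type*} [Field F] [CharZero F] (n : ℕ)

noncomputable def psumP (r : ℕ) : MvPolynomial (Fin n) F :=
  ∑ i : Fin n, X i ^ r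

noncomputable def Un (f : MvPolynomial (Fin n) F) : MvPolynomial (Fin n) F :=
  C (1 / 2 : F) * ∑ i : Fin n, X i ^ 2 * pderiv i (pderiv i f)

theorem Finset.sum_offDiag_eq_sum_sum_erase {ι M : Type*} [DecidableEq ι] [AddCommMonoid M]
    (u : Finset ι) (f : ι → ι → M) :
    ∑ p ∈ u.offDiag, f p.1 p.2 = ∑ j ∈ u, ∑ k ∈ u.erase j, f j k :=
  sum_finset_product' _ _ _ fun p => by simp [and_comm (a := p.1 ≠ p.2), ne_comm]

namespace Derivation

variable {R A M : Type*} [CommSemiring R] [CommSemiring A] [Algebra R A] [AddCommMonoid M]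
  [Module A M] [Module R M] {ι : Type*} [DecidableEq ι]

theorem leibniz_finsetProd (D : Derivation R A M) (u : Finset ι) (f : ι → A) :
    D (∏ m ∈ u, f m) = ∑ j ∈ u, (∏ m ∈ u.erase j, f m) • D (f j) := by
  induction u using Finset.induction_on with
  | empty => simp
  | insert a t ha ih =>
    rw [prod_insert ha, leibniz, ih, sum_insert ha, erase_insert ha, smul_sum, add_comm]
    congr 1
    refine sum_congr rfl fun j hj => ?_
    rw [erase_insert_of_ne (ne_of_mem_of_not_mem hj ha).symm, prod_insert (by simp [ha]),
      mul_smul]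

theorem apply_apply_finsetProd (D : Derivation R A A) (u : Finset ι) (f : ι → A) :
    D (D (∏ m ∈ u, f m)) = ∑ j ∈ u, D (D (f j)) * ∏ m ∈ u.erase j, f m +
      ∑ p ∈ u.offDiag, D (f p.1) * D (f p.2) * ∏ m ∈ u \ {p.1, p.2}, f m := by
  have erase_erase (j k : ι) : (u.erase j).erase k = u \ {j, k} := by
    ext; simp [and_comm, and_assoc, and_left_comm]
  rw [sum_offDiag_eq_sum_sum_erase u fun j k => D (f j) * D (f k) * ∏ m ∈ u \ {j, k}, f m,
    leibniz_finsetProd, map_sum]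
  simp only [leibniz, leibniz_finsetProd, smul_eq_mul, mul_sum, sum_add_distrib, erase_erase]
  congr 1 <;> refine sum_congr rfl fun j _ => ?_
  · ring
  · exact sum_congr rfl fun k _ => by ring

end Derivation

theorem MvPolynomial.sum_mul_pderiv_pderiv_prod {σ R ι : Type*} [CommSemiring R] [Fintype σ]
    [DecidableEq ι] (w : σ → MvPolynomial σ R) (u : Finset ι) (f : ι → MvPolynomial σ R) :
    ∑ i, w i * pderiv i (pderiv i (∏ m ∈ u, f m)) =
      ∑ j ∈ u, (∑ i, w i * pderiv i (pderiv i (f j))) * ∏ m ∈ u.erase j, f m +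
        ∑ p ∈ u.offDiag, (∑ i, w i * (pderiv i (f p.1) * pderiv i (f p.2))) *
          ∏ m ∈ u \ {p.1, p.2}, f m := by
  simp_rw [Derivation.apply_apply_finsetProd, mul_add, sum_add_distrib, sum_mul, mul_sum]
  rw [sum_comm (s := univ), sum_comm (s := univ)]
  simp only [mul_assoc]

section PowerSum

variable {K : Type*} [Field K]

theorem pderiv_psumP (i : Fin n) (r : ℕ) :
    pderiv i (psumP n r : MvPolynomial (Fin n) K) = C (r : K) * X i ^ (r - 1) := by
  rw [psumP, map_sum, sum_eq_single i (fun j _ hj => by simp [pderiv_X_of_ne hj]) (by simp)]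
  simp

theorem X_mul_pderiv_psumP (i : Fin n) (r : ℕ) :
    X i * pderiv i (psumP n r : MvPolynomial (Fin n) K) = C (r : K) * X i ^ r := by
  rw [pderiv_psumP]
  rcases r with _ | r
  · simp
  · simp only [Nat.add_sub_cancel]; ring

theorem X_sq_mul_pderiv_pderiv_psumP (i : Fin n) (r : ℕ) :
    X i ^ 2 * pderiv i (pderiv i (psumP n r : MvPolynomial (Fin n) K)) =
      C ((r * (r - 1) : ℕ) : K) * X i ^ r := by
  rw [pderiv_psumP, pderiv_C_mul, pderiv_pow, pderiv_X_self]
  rcases r with _ | _ | r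
  · simp
  · simp
  · simp only [Nat.add_sub_cancel, map_natCast]; push_cast; ring

theorem X_sq_mul_pderiv_mul_pderiv_psumP (i : Fin n) (a b : ℕ) :
    X i ^ 2 * (pderiv i (psumP n a : MvPolynomial (Fin n) K) * pderiv i (psumP n b)) =
      C ((a * b : ℕ) : K) * X i ^ (a + b) :=
  calc _ = X i * pderiv i (psumP n a : MvPolynomial (Fin n) K) * (X i * pderiv i (psumP n b)) := by
          ring
    _ = _ := by rw [X_mul_pderiv_psumP, X_mul_pderiv_psumP, Nat.cast_mul, C_mul]; ring

theorem sum_X_sq_mul_pderiv_pderiv_psumP (r : ℕ) :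
    ∑ i, X i ^ 2 * pderiv i (pderiv i (psumP n r : MvPolynomial (Fin n) K)) =
      C ((r * (r - 1) : ℕ) : K) * psumP n r := by
  simp only [X_sq_mul_pderiv_pderiv_psumP, ← mul_sum]
  rfl

theorem sum_X_sq_mul_pderiv_mul_pderiv_psumP (a b : ℕ) :
    ∑ i, X i ^ 2 * (pderiv i (psumP n a : MvPolynomial (Fin n) K) * pderiv i (psumP n b)) =
      C ((a * b : ℕ) : K) * psumP n (a + b) := by
  simp only [X_sq_mul_pderiv_mul_pderiv_psumP, ← mul_sum]
  rfl

end PowerSum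

theorem Un_powerSum (s : ℕ) (lam : Fin s → ℕ) :
    Un n (∏ m : Fin s, psumP n (lam m)) =
      C ((1 / 2 : F) * ∑ m : Fin s, (lam m * (lam m - 1) : ℕ)) *
          ∏ m : Fin s, psumP n (lam m) +
        C (1 / 2 : F) * ∑ p ∈ Finset.univ.offDiag,
          C ((lam p.1 * lam p.2 : ℕ) : F) * psumP n (lam p.1 + lam p.2) *
            ∏ m ∈ Finset.univ \ {p.1, p.2}, psumP n (lam m) := by
  have diagonal : ∑ j, C ((lam j * (lam j - 1) : ℕ) : F) * psumP n (lam j) *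
      ∏ m ∈ univ.erase j, psumP n (lam m) =
      C ((∑ m, lam m * (lam m - 1) : ℕ) : F) * ∏ m, psumP n (lam m) := by
    rw [Nat.cast_sum, map_sum, sum_mul]
    refine sum_congr rfl fun j _ => ?_
    rw [mul_assoc, mul_prod_erase univ (fun m => psumP n (lam m)) (mem_univ j)]
  rw [Un, sum_mul_pderiv_pderiv_prod, mul_add, C_mul, mul_assoc]
  simp only [sum_X_sq_mul_pderiv_pderiv_psumP, sum_X_sq_mul_pderiv_mul_pderiv_psumP, diagonal]
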